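/- arXiv:1904.10457 — 2 statements merged into one kernel-verified Lean document; each statement's English description precedes it below -/
import Mathlib

section
/- Let G be a discrete abelian group and 𝒜 : ℓ²(G)^N → ℓ²(G)^M a bounded linear operator that commutes with all translations T_g. Then there exists a unique M×N matrix A with entries in ℓ²(G) such that 𝒜(x) = A ∗ x for all x ∈ ℓ²(G)^N; moreover each entry of the Fourier transform matrix Â lies in L^∞(Ĝ), and the entries of A are given explicitly by a_{m,n} = [𝒜(δ e_n)]_m, where δ is the Dirac delta at the identity of G and e_n is the n-th standard basis vector. -/
open MeasureTheory Complex
open scoped ENNReal ComplexOrder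

set_option maxHeartbeats 1000000
set_option synthInstance.maxHeartbeats 400000

noncomputable section

/-- Discrete convolution of two complex-valued functions on a discrete abelian group `G`:
`(x ∗ y)(h) = ∑_{g ∈ G} x(g) y(h - g)`. -/
def conv {G : Type*} [AddCommGroup G] (x y : G → ℂ) : G → ℂ :=
  fun h => ∑' g, x g * y (h - g)

/-- `ℓ²(G)` with complex values. -/
abbrev ell2 (G : Type*) [AddCommGroup G] : Type _ := lp (fun _ : G => ℂ) 2

/-- Componentwise matrix convolution: `[A ∗ x]_m = ∑_n a_{m,n} ∗ x_n`. -/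
def matConv {G : Type*} [AddCommGroup G] {M N : ℕ}
    (A : Fin M → Fin N → G → ℂ) (x : Fin N → G → ℂ) : Fin M → G → ℂ :=
  fun m h => ∑ n, conv (A m n) (x n) h

theorem memℓp_translate {G : Type*} [AddCommGroup G] (g : G) (x : ell2 G) :
    Memℓp (fun h => (x : G → ℂ) (h - g)) 2 := by
  have hx : Summable (fun h : G => ‖(x : G → ℂ) h‖ ^ (2 : ℝ≥0∞).toReal) :=
    Memℓp.summable (by simp) (lp.memℓp x)
  have h2 : Summable (fun h : G => ‖(x : G → ℂ) (h - g)‖ ^ (2 : ℝ≥0∞).toReal) :=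
    (Equiv.subRight g).summable_iff.mpr hx
  exact memℓp_gen h2

/-- The translation operator `T_g` on `ℓ²(G)`: `(T_g x)(h) = x(h - g)`. -/
def translLp {G : Type*} [AddCommGroup G] (g : G) (x : ell2 G) : ell2 G :=
  ⟨fun h => (x : G → ℂ) (h - g), memℓp_translate g x⟩

/-!
Write `δ_g` for the unit vector of `ℓ²(G)` at `g`. Translation invariance gives
`[𝒜(δ_g e_n)]_m = T_g a_{m,n}` with `a_{m,n} = [𝒜(δ e_n)]_m`, so expanding
`x = ∑ x_n(g) δ_g e_n` (convergent in `ℓ²`) and applying the continuous map `𝒜` yields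
`𝒜 x = A ∗ x`; testing against `x = δ e_n` gives uniqueness.

The transform `F` turns `T_g` into multiplication by `e(-g) = F δ_g`, so every entry
`B = 𝒜_{m,n}` satisfies `F(B y) = F y · F a` a.e., first on the span of the `δ_g` and then
for all `y`, since a multiplier identity of this kind is preserved under `L²` limits
(pass to a.e. convergent subsequences). Testing it on indicators gives
`∫_s |F a|² ≤ ‖B‖² μ(s)` for all `s`, hence `‖F a‖_∞ ≤ ‖B‖`.
-/

open Filter

namespace MeasureTheory

section Multiplier

variable {α 𝕜 E : Type*} [MeasurableSpace α] {μ : Measure α} {p : ℝ≥0∞} [Fact (1 ≤ p)]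
  [NormedField 𝕜] [AddCommGroup E] [Module 𝕜 E] [TopologicalSpace E]

def eqMulSubmodule (S R : E →L[𝕜] Lp 𝕜 p μ) (φ : α → 𝕜) : Submodule 𝕜 E where
  carrier := {y | (S y : α → 𝕜) =ᵐ[μ] (R y : α → 𝕜) * φ}
  add_mem' {y z} hy hz := by
    simp only [Set.mem_ofPred_eq, map_add]
    filter_upwards [hy, hz, Lp.coeFn_add (S y) (S z), Lp.coeFn_add (R y) (R z)]
      with x hy hz hS hR
    simp_all [add_mul]
  zero_mem' := by
    simp only [Set.mem_ofPred_eq, map_zero]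
    filter_upwards [Lp.coeFn_zero 𝕜 p μ] with x hx
    rw [Pi.mul_apply, hx, Pi.zero_apply, zero_mul]
  smul_mem' c y hy := by
    simp only [Set.mem_ofPred_eq, map_smul]
    filter_upwards [hy, Lp.coeFn_smul c (S y), Lp.coeFn_smul c (R y)] with x hy hS hR
    simp_all [mul_assoc]

theorem isClosed_eqMulSubmodule [SequentialSpace E] (S R : E →L[𝕜] Lp 𝕜 p μ) (φ : α → 𝕜) :
    IsClosed (eqMulSubmodule S R φ : Set E) := by
  refine IsSeqClosed.isClosed fun y y₀ hy hlim => ?_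
  obtain ⟨ns, hns, hR⟩ := (tendstoInMeasure_of_tendsto_Lp
    ((R.continuous.tendsto y₀).comp hlim)).exists_seq_tendsto_ae
  obtain ⟨ms, hms, hS⟩ := (tendstoInMeasure_of_tendsto_Lp
    ((S.continuous.tendsto y₀).comp (hlim.comp hns.tendsto_atTop))).exists_seq_tendsto_ae
  filter_upwards [hR, hS, ae_all_iff.2 hy] with x hRx hSx hyx
  refine tendsto_nhds_unique hSx ?_
  simp only [Function.comp_apply, hyx, Pi.mul_apply]
  exact (hRx.comp hms.tendsto_atTop).mul_const _

theorem ae_eq_mul_of_dense_span [SequentialSpace E] {S R : E →L[𝕜] Lp 𝕜 p μ} {φ : α → 𝕜}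
    {D : Set E} (hD : Dense (Submodule.span 𝕜 D : Set E))
    (hS : ∀ y ∈ D, (S y : α → 𝕜) =ᵐ[μ] (R y : α → 𝕜) * φ) (y : E) :
    (S y : α → 𝕜) =ᵐ[μ] (R y : α → 𝕜) * φ :=
  (isClosed_eqMulSubmodule S R φ).closure_subset_iff.2
    (Submodule.span_le.2 (show D ⊆ eqMulSubmodule S R φ from hS)) (hD y)

end Multiplier

theorem eLpNorm_top_le_of_eLpNorm_indicator_le {α F : Type*} [MeasurableSpace α]
    {μ : Measure α} [SigmaFinite μ] [NormedAddCommGroup F] {f : α → F}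
    (hf : AEStronglyMeasurable f μ) {p : ℝ≥0∞} (hp0 : p ≠ 0) (hp : p ≠ ∞) {C : ℝ≥0∞}
    (h : ∀ s, MeasurableSet s → μ s < ∞ →
      eLpNorm (s.indicator f) p μ ≤ C * μ s ^ (1 / p.toReal)) :
    eLpNorm f ∞ μ ≤ C := by
  have hp' : 0 < p.toReal := ENNReal.toReal_pos hp0 hp
  have key : (fun x => ‖f x‖ₑ ^ p.toReal) ≤ᵐ[μ] fun _ => C ^ p.toReal := by
    refine ae_le_of_forall_setLIntegral_le_of_sigmaFinite₀ (hf.enorm.pow_const _)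
      fun s hs hμs => ?_
    have := ENNReal.rpow_le_rpow (h s hs hμs) hp'.le
    rw [eLpNorm_indicator_eq_eLpNorm_restrict hs, eLpNorm_eq_lintegral_rpow_enorm_toReal hp0 hp,
      ← ENNReal.rpow_mul, ENNReal.mul_rpow_of_nonneg _ _ hp'.le, ← ENNReal.rpow_mul,
      one_div_mul_cancel hp'.ne', ENNReal.rpow_one, ENNReal.rpow_one] at this
    rwa [setLIntegral_const]
  rw [eLpNorm_exponent_top]
  refine eLpNormEssSup_le_of_ae_enorm_bound ?_
  filter_upwards [key] with x hx
  exact (ENNReal.rpow_le_rpow_iff hp').1 hx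

end MeasureTheory

theorem lp.dense_span_range_single {ι 𝕜 : Type*} [DecidableEq ι] [NormedField 𝕜] {p : ℝ≥0∞}
    [Fact (1 ≤ p)] (hp : p ≠ ∞) :
    Dense (Submodule.span 𝕜 (Set.range fun i : ι => lp.single p i (1 : 𝕜)) :
      Set (lp (fun _ : ι => 𝕜) p)) := by
  intro x
  refine mem_closure_of_tendsto (lp.hasSum_single hp x) (Eventually.of_forall fun s => ?_)
  refine Submodule.sum_mem _ fun i _ => ?_
  rw [← mul_one (x i), ← smul_eq_mul, lp.single_smul]
  exact Submodule.smul_mem _ _ (Submodule.subset_span ⟨i, rfl⟩)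

section Translation

variable {G : Type*} [AddCommGroup G]

@[simp]
theorem translLp_apply (g : G) (x : ell2 G) (h : G) : translLp g x h = x (h - g) := rfl

theorem translLp_zero (g : G) : translLp g (0 : ell2 G) = 0 := rfl

theorem translLp_single [DecidableEq G] (g g' : G) (c : ℂ) :
    translLp g (lp.single 2 g' c) = lp.single 2 (g + g') c := by
  ext h
  simp [lp.single_apply, Pi.single_apply, sub_eq_iff_eq_add']

theorem norm_translLp (g : G) (x : ell2 G) : ‖translLp g x‖ = ‖x‖ := by
  have h2 : 0 < (2 : ℝ≥0∞).toReal := by norm_num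
  refine Real.rpow_left_injOn h2.ne' (norm_nonneg _) (norm_nonneg _) ?_
  simp only [lp.norm_rpow_eq_tsum h2, translLp_apply]
  exact (Equiv.subRight g).tsum_eq fun h => ‖x h‖ ^ (2 : ℝ≥0∞).toReal

def translL (g : G) : ell2 G →L[ℂ] ell2 G :=
  LinearMap.mkContinuous
    { toFun := translLp g
      map_add' _ _ := rfl
      map_smul' _ _ := rfl }
    1 fun x => (norm_translLp g x).trans_le (one_mul _).ge

@[simp]
theorem translL_apply (g : G) (x : ell2 G) : translL g x = translLp g x := rfl

end Translation

section Convolution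

variable {G : Type*} [AddCommGroup G] [DecidableEq G]

theorem coe_apply_eq_conv {B : ell2 G →L[ℂ] ell2 G}
    (hB : ∀ g y, B (translLp g y) = translLp g (B y)) (y : ell2 G) :
    ⇑(B y) = conv ⇑(B (lp.single 2 0 1)) ⇑y := by
  ext h
  have hsum := (lp.hasSum_single (by norm_num) y).mapL
    ((lp.evalCLM ℂ (fun _ : G => ℂ) 2 h).comp B)
  rw [conv, ← (Equiv.subLeft h).tsum_eq]
  refine hsum.tsum_eq.symm.trans (tsum_congr fun g => ?_)
  have hδ : lp.single 2 g (y g) = y g • translLp g (lp.single 2 0 1) := by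
    rw [translLp_single, add_zero, ← lp.single_smul, smul_eq_mul, mul_one]
  simp only [ContinuousLinearMap.comp_apply, hδ, map_smul, hB, Equiv.subLeft_apply,
    sub_sub_cancel]
  simp [lp.evalCLM, mul_comm]

theorem conv_single_zero (a : G → ℂ) : conv a (Pi.single 0 1) = a := by
  ext h
  rw [conv, tsum_eq_single h fun g hg => ?_]
  · simp
  · simp [sub_eq_zero, Ne.symm hg]

theorem matConv_single {M N : ℕ} (B : Fin M → Fin N → G → ℂ) (m : Fin M) (n : Fin N) :
    matConv B (Pi.single n (Pi.single 0 1)) m = B m n := by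
  ext h
  rw [matConv, Finset.sum_eq_single n, Pi.single_eq_same, conv_single_zero]
  · intro n' _ hn'
    simp [Pi.single_eq_of_ne hn', conv]
  · simp

end Convolution

section Fourier

variable {G : Type*} [AddCommGroup G] [DecidableEq G] {Gd : Type*} [MeasurableSpace Gd]
  {μ : Measure Gd} {e : AddChar G (Gd → ℂ)} {F : ell2 G ≃ₗᵢ[ℂ] Lp ℂ 2 μ}

theorem fourier_translLp (hF : ∀ g : G, (F (lp.single 2 g 1) : Gd → ℂ) =ᵐ[μ] e (-g))
    (g : G) (y : ell2 G) : (F (translLp g y) : Gd → ℂ) =ᵐ[μ] (F y : Gd → ℂ) * e (-g) := by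
  refine ae_eq_mul_of_dense_span (S := (F : ell2 G →L[ℂ] Lp ℂ 2 μ).comp (translL g))
    (R := F) (lp.dense_span_range_single (by norm_num)) ?_ y
  rintro _ ⟨h, rfl⟩
  filter_upwards [hF (g + h), hF h] with ξ h1 h2
  simp [translLp_single, h1, h2, AddChar.map_add_eq_mul, mul_comm]

theorem fourier_apply_eq_mul (hF : ∀ g : G, (F (lp.single 2 g 1) : Gd → ℂ) =ᵐ[μ] e (-g))
    {B : ell2 G →L[ℂ] ell2 G} (hB : ∀ g y, B (translLp g y) = translLp g (B y)) (y : ell2 G) :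
    (F (B y) : Gd → ℂ) =ᵐ[μ] (F y : Gd → ℂ) * F (B (lp.single 2 0 1)) := by
  refine ae_eq_mul_of_dense_span (S := (F : ell2 G →L[ℂ] Lp ℂ 2 μ).comp B)
    (R := F) (lp.dense_span_range_single (by norm_num)) ?_ y
  rintro _ ⟨g, rfl⟩
  have hBg : B (lp.single 2 g 1) = translLp g (B (lp.single 2 0 1)) := by
    rw [← hB, translLp_single, add_zero]
  filter_upwards [fourier_translLp hF g (B (lp.single 2 0 1)), hF g] with ξ h1 h2
  simp [hBg, h1, h2, mul_comm]

theorem memLp_top_fourier [SigmaFinite μ]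
    (hF : ∀ g : G, (F (lp.single 2 g 1) : Gd → ℂ) =ᵐ[μ] e (-g))
    {B : ell2 G →L[ℂ] ell2 G} (hB : ∀ g y, B (translLp g y) = translLp g (B y)) :
    MemLp (F (B (lp.single 2 0 1)) : Gd → ℂ) ∞ μ := by
  set φ : Gd → ℂ := ⇑(F (B (lp.single 2 0 1)))
  refine ⟨Lp.aestronglyMeasurable _, (eLpNorm_top_le_of_eLpNorm_indicator_le
    (Lp.aestronglyMeasurable _) two_ne_zero ENNReal.ofNat_ne_top (C := ‖B‖ₑ)
    fun s hs hμs => ?_).trans_lt enorm_lt_top⟩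
  set f := indicatorConstLp 2 hs hμs.ne (1 : ℂ)
  have hf := fourier_apply_eq_mul hF hB (F.symm f)
  rw [F.apply_symm_apply] at hf
  have hind : (F (B (F.symm f)) : Gd → ℂ) =ᵐ[μ] s.indicator φ := by
    filter_upwards [hf, indicatorConstLp_coeFn (p := 2) (hs := hs) (hμs := hμs.ne)
      (c := (1 : ℂ))] with ξ h1 h2
    rw [h1, Pi.mul_apply, h2]
    by_cases hξ : ξ ∈ s <;> simp [hξ, φ]
  calc eLpNorm (s.indicator φ) 2 μ = ‖F (B (F.symm f))‖ₑ := by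
        rw [Lp.enorm_def, eLpNorm_congr_ae hind]
    _ ≤ ‖B‖ₑ * ‖f‖ₑ := by
        rw [F.enorm_map, ← F.symm.enorm_map f]
        exact B.le_opENorm _
    _ ≤ ‖B‖ₑ * μ s ^ (1 / (2 : ℝ≥0∞).toReal) := by
        gcongr
        simpa using enorm_indicatorConstLp_le (p := 2) (hs := hs) (hμs := hμs.ne) (c := (1 : ℂ))

end Fourier

section Entries

variable {𝕜 E ι κ : Type*} [NormedField 𝕜] [NormedAddCommGroup E] [NormedSpace 𝕜 E]
  {p : ℝ≥0∞} [DecidableEq ι]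

def opEntry (𝒜 : PiLp p (fun _ : ι => E) →L[𝕜] PiLp p (fun _ : κ => E)) (m : κ) (n : ι) :
    E →L[𝕜] E :=
  (PiLp.proj p (fun _ => E) m).comp <| 𝒜.comp <|
    (PiLp.continuousLinearEquiv p 𝕜 (fun _ : ι => E)).symm.toContinuousLinearMap.comp
      (ContinuousLinearMap.single 𝕜 (fun _ : ι => E) n)

theorem opEntry_apply (𝒜 : PiLp p (fun _ : ι => E) →L[𝕜] PiLp p (fun _ : κ => E)) (m : κ)
    (n : ι) (y : E) : opEntry 𝒜 m n y = 𝒜 (PiLp.single p n y) m := rfl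

theorem apply_eq_sum_opEntry [Fintype ι]
    (𝒜 : PiLp p (fun _ : ι => E) →L[𝕜] PiLp p (fun _ : κ => E)) (x : PiLp p (fun _ : ι => E))
    (m : κ) : 𝒜 x m = ∑ n, opEntry 𝒜 m n (x n) := by
  have hx : x = ∑ n, PiLp.single p n (x n) := by
    ext i
    simp
  conv_lhs => rw [hx]
  simp [opEntry_apply]

end Entries

section TranslationInvariant

variable {G ι κ : Type*} [AddCommGroup G] [DecidableEq ι]

theorem opEntry_translLp
    {𝒜 : PiLp 2 (fun _ : ι => ell2 G) →L[ℂ] PiLp 2 (fun _ : κ => ell2 G)}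
    (hcomm : ∀ (g : G) (x : PiLp 2 (fun _ : ι => ell2 G)),
      𝒜 ((WithLp.equiv 2 _).symm fun n => translLp g (x n)) =
        (WithLp.equiv 2 _).symm fun m => translLp g (𝒜 x m))
    (m : κ) (n : ι) (g : G) (y : ell2 G) :
    opEntry 𝒜 m n (translLp g y) = translLp g (opEntry 𝒜 m n y) := by
  have hsingle : PiLp.single 2 n (translLp g y) =
      (WithLp.equiv 2 _).symm fun n' =>
        translLp g (PiLp.single 2 (β := fun _ : ι => ell2 G) n y n') := by
    ext n' : 1
    by_cases h : n' = n <;> simp [h, translLp_zero]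
  rw [opEntry_apply, hsingle, hcomm]
  rfl

theorem coeFn_piLp_single_lp_single [DecidableEq G] (n : ι) (g : G) (c : ℂ) :
    (fun n' => ⇑(PiLp.single 2 (β := fun _ : ι => ell2 G) n (lp.single 2 g c) n')) =
      Pi.single n (Pi.single g c) := by
  ext n' : 1
  by_cases h : n' = n
  · simp [h, lp.coeFn_single]
  · rw [PiLp.single_eq_of_ne _ h, Pi.single_eq_of_ne h]
    rfl

end TranslationInvariant

theorem stmt_3_general {G : Type*} [AddCommGroup G] [DecidableEq G]
    {Gd : Type*} [MeasurableSpace Gd] (μ : Measure Gd) [IsProbabilityMeasure μ]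
    (e : AddChar G (Gd → ℂ))
    (F : lp (fun _ : G => ℂ) 2 ≃ₗᵢ[ℂ] Lp ℂ 2 μ)
    (hF : ∀ g : G, (F (lp.single 2 g 1) : Gd → ℂ) =ᵐ[μ] e (-g))
    {M N : ℕ}
    (𝒜 : PiLp 2 (fun _ : Fin N => ell2 G) →L[ℂ] PiLp 2 (fun _ : Fin M => ell2 G))
    (hcomm : ∀ (g : G) (x : PiLp 2 (fun _ : Fin N => ell2 G)),
      𝒜 ((WithLp.equiv 2 _).symm fun n => translLp g (x n)) =
        (WithLp.equiv 2 _).symm fun m => translLp g (𝒜 x m)) :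
    ∃ A : Fin M → Fin N → ell2 G,
      (∀ (x : PiLp 2 (fun _ : Fin N => ell2 G)) (m : Fin M),
          ((𝒜 x m : G → ℂ)) =
            matConv (fun m n => (A m n : G → ℂ)) (fun n => (x n : G → ℂ)) m) ∧
      (∀ A' : Fin M → Fin N → ell2 G,
          (∀ (x : PiLp 2 (fun _ : Fin N => ell2 G)) (m : Fin M),
              ((𝒜 x m : G → ℂ)) =
                matConv (fun m n => (A' m n : G → ℂ)) (fun n => (x n : G → ℂ)) m) → A' = A) ∧
      (∀ m n, MemLp (F (A m n) : Gd → ℂ) ∞ μ) ∧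
      (∀ m n, A m n =
        𝒜 ((WithLp.equiv 2 _).symm fun n' =>
            if n' = n then lp.single 2 (0 : G) (1 : ℂ) else 0) m) := by
  have hentry : ∀ m n g y, opEntry 𝒜 m n (translLp g y) = translLp g (opEntry 𝒜 m n y) :=
    opEntry_translLp hcomm
  refine ⟨fun m n => opEntry 𝒜 m n (lp.single 2 0 1), fun x m => ?_, fun A' hA' => ?_,
    fun m n => memLp_top_fourier hF (hentry m n), fun m n => ?_⟩
  · ext h
    rw [apply_eq_sum_opEntry 𝒜 x m, lp.coeFn_sum, Finset.sum_apply]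
    exact Finset.sum_congr rfl fun n _ => by rw [coe_apply_eq_conv (hentry m n)]
  · ext m n : 2
    have h := hA' (PiLp.single 2 n (lp.single 2 0 1)) m
    rw [coeFn_piLp_single_lp_single, matConv_single] at h
    exact lp.ext h.symm
  · change opEntry 𝒜 m n _ = _
    rw [opEntry_apply, ← PiLp.toLp_single]
    exact congrArg (fun x => 𝒜 (WithLp.toLp 2 x) m) (funext fun n' => Pi.single_apply n _ n')

/-- A bounded operator `𝒜 : ℓ²(G)^N → ℓ²(G)^M` commuting with all
translations is given by convolution with a unique matrix `A ∈ M_{M×N}(ℓ²(G))`; moreover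
each entry of `Â` is essentially bounded and `a_{m,n} = [𝒜(δ e_n)]_m`. -/
theorem stmt_3 {G : Type*} [AddCommGroup G] [DecidableEq G]
    {Gd : Type*} [MeasurableSpace Gd] (μ : Measure Gd) [IsProbabilityMeasure μ]
    (e : AddChar G (Gd → ℂ)) (he : ∀ g ξ, ‖e g ξ‖ = 1)
    (F : lp (fun _ : G => ℂ) 2 ≃ₗᵢ[ℂ] Lp ℂ 2 μ)
    (hF : ∀ g : G, (F (lp.single 2 g 1) : Gd → ℂ) =ᵐ[μ] e (-g))
    {M N : ℕ}
    (𝒜 : PiLp 2 (fun _ : Fin N => ell2 G) →L[ℂ] PiLp 2 (fun _ : Fin M => ell2 G))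
    (hcomm : ∀ (g : G) (x : PiLp 2 (fun _ : Fin N => ell2 G)),
      𝒜 ((WithLp.equiv 2 _).symm fun n => translLp g (x n)) =
        (WithLp.equiv 2 _).symm fun m => translLp g (𝒜 x m)) :
    ∃ A : Fin M → Fin N → ell2 G,
      (∀ (x : PiLp 2 (fun _ : Fin N => ell2 G)) (m : Fin M),
          ((𝒜 x m : G → ℂ)) =
            matConv (fun m n => (A m n : G → ℂ)) (fun n => (x n : G → ℂ)) m) ∧
      (∀ A' : Fin M → Fin N → ell2 G,
          (∀ (x : PiLp 2 (fun _ : Fin N => ell2 G)) (m : Fin M),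
              ((𝒜 x m : G → ℂ)) =
                matConv (fun m n => (A' m n : G → ℂ)) (fun n => (x n : G → ℂ)) m) → A' = A) ∧
      (∀ m n, MemLp (F (A m n) : Gd → ℂ) ∞ μ) ∧
      (∀ m n, A m n =
        𝒜 ((WithLp.equiv 2 _).symm fun n' =>
            if n' = n then lp.single 2 (0 : G) (1 : ℂ) else 0) m) :=
  stmt_3_general μ e F hF 𝒜 hcomm
end
end

section
/- Let G be a discrete abelian group, π a unitary representation of G on a separable complex Hilbert space H, and φ₁,…,φ_N ∈ H. Define a_{m,n}(g) = ⟨φ_n, π_g φ_m⟩ and assume each a_{m,n} ∈ ℓ²(G). If the system {π_g φ_n : 1 ≤ n ≤ N, g ∈ G} is a Bessel sequence with bound β — i.e., ‖Σ_{n,g} x_n(g) π_g φ_n‖² ≤ β ‖x‖² for all finitely supported x ∈ ℓ²(G)^N — then for every x, y ∈ ℓ²(G)^N one has ⟨Σ_{n,g} x_n(g) π_g φ_n, Σ_{m,g} y_m(g) π_g φ_m⟩_H = ⟨A ∗ x, y⟩_{ℓ²(G)^N}, where A = [a_{m,n}], and the convolution operator x ↦ A ∗ x is bounded on ℓ²(G)^N.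 -/
open MeasureTheory Complex
open scoped ENNReal ComplexOrder

set_option maxHeartbeats 1000000
set_option synthInstance.maxHeartbeats 400000

noncomputable section

/-- The Bessel inequality with bound `β` for the system `{π_g φ_n}`, stated for finitely
supported coefficient vectors. -/
def besselBound {G : Type*} [AddCommGroup G]
    {H : Type*} [NormedAddCommGroup H] [InnerProductSpace ℂ H] {N : ℕ}
    (π : G → (H ≃ₗᵢ[ℂ] H)) (φ : Fin N → H) (β : ℝ) : Prop :=
  ∀ x : Fin N → (G →₀ ℂ),
    ‖∑ n, (x n).sum fun g c => c • (π g) (φ n)‖ ^ 2 ≤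
      β * ∑ n, ∑ g ∈ (x n).support, ‖x n g‖ ^ 2

/-- The synthesis sum `Σ_{n,g} x_n(g) π_g φ_n` for `x ∈ ℓ²(G)^N` (junk value if the family
is not summable). -/
def synth {G : Type*} [AddCommGroup G]
    {H : Type*} [NormedAddCommGroup H] [InnerProductSpace ℂ H] [CompleteSpace H] {N : ℕ}
    (π : G → (H ≃ₗᵢ[ℂ] H)) (φ : Fin N → H)
    (x : PiLp 2 (fun _ : Fin N => ell2 G)) : H :=
  ∑' p : Fin N × G, ((x p.1 : G → ℂ) p.2) • (π p.2) (φ p.1)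

/-!
The Bessel inequality for finite sums makes the synthesis series `∑ x_n(g) π_g φ_n` converge
unconditionally with `‖∑ x_n(g) π_g φ_n‖² ≤ β ‖x‖²`, and, applied to the coefficients
`⟪π_g φ_m, u⟫` themselves, it bounds them: `∑ |⟪π_g φ_m, u⟫|² ≤ β ‖u‖²`. Since `π` is
unitary and additive, `⟪π_g φ_m, π_g' φ_n⟫ = a_{m,n}(g - g')`, so the analysis coefficients of
the synthesis of `x` are exactly the entries `(A ∗ x)_m(g)`. Expanding the left synthesis in
`⟪Σy, Σx⟫` gives the inner product identity, and `‖A ∗ x‖² ≤ β ‖Σx‖² ≤ β² ‖x‖²` gives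
boundedness.
-/

section Bessel

variable (𝕜 : Type*) {ι E : Type*} [RCLike 𝕜] [NormedAddCommGroup E] [InnerProductSpace 𝕜 E]

def IsBesselFamily (v : ι → E) (β : ℝ) : Prop :=
  ∀ (c : ι → 𝕜) (s : Finset ι), ‖∑ i ∈ s, c i • v i‖ ^ 2 ≤ β * ∑ i ∈ s, ‖c i‖ ^ 2

variable {𝕜}

namespace IsBesselFamily

variable {v : ι → E} {β : ℝ}

theorem max_zero (hv : IsBesselFamily 𝕜 v β) : IsBesselFamily 𝕜 v (max β 0) := fun c s =>
  (hv c s).trans <| mul_le_mul_of_nonneg_right (le_max_left _ _) <|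
    Finset.sum_nonneg fun _ _ => sq_nonneg _

theorem summable_smul [CompleteSpace E] (hv : IsBesselFamily 𝕜 v β) (hβ : 0 ≤ β) {c : ι → 𝕜}
    (hc : Summable fun i => ‖c i‖ ^ 2) : Summable fun i => c i • v i := by
  rw [summable_iff_vanishing_norm]
  intro ε hε
  obtain ⟨s, hs⟩ := summable_iff_vanishing_norm.mp hc (ε ^ 2 / (β + 1)) (by positivity)
  refine ⟨s, fun t ht => pow_lt_pow_iff_left₀ (norm_nonneg _) hε.le two_ne_zero |>.mp ?_⟩
  have htail : ∑ i ∈ t, ‖c i‖ ^ 2 < ε ^ 2 / (β + 1) :=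
    (Real.le_norm_self _).trans_lt (hs t ht)
  calc ‖∑ i ∈ t, c i • v i‖ ^ 2 ≤ β * ∑ i ∈ t, ‖c i‖ ^ 2 := hv c t
    _ ≤ (β + 1) * ∑ i ∈ t, ‖c i‖ ^ 2 := by gcongr; linarith
    _ < (β + 1) * (ε ^ 2 / (β + 1)) := by gcongr
    _ = ε ^ 2 := by field_simp

theorem norm_tsum_smul_sq_le (hv : IsBesselFamily 𝕜 v β) (hβ : 0 ≤ β) {c : ι → 𝕜}
    (hc : Summable fun i => ‖c i‖ ^ 2) (hcv : Summable fun i => c i • v i) :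
    ‖∑' i, c i • v i‖ ^ 2 ≤ β * ∑' i, ‖c i‖ ^ 2 := by
  refine le_of_tendsto ((continuous_norm.pow 2).continuousAt.tendsto.comp hcv.hasSum) <|
    Filter.Eventually.of_forall fun s => ?_
  exact (hv c s).trans <| mul_le_mul_of_nonneg_left (hc.sum_le_tsum s fun _ _ => sq_nonneg _) hβ

theorem sum_norm_inner_sq_le (hv : IsBesselFamily 𝕜 v β) (hβ : 0 ≤ β) (u : E) (s : Finset ι) :
    ∑ i ∈ s, ‖(inner 𝕜 (v i) u : 𝕜)‖ ^ 2 ≤ β * ‖u‖ ^ 2 := by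
  set r := ∑ i ∈ s, ‖(inner 𝕜 (v i) u : 𝕜)‖ ^ 2
  set S := ∑ i ∈ s, (inner 𝕜 (v i) u : 𝕜) • v i
  have hr : 0 ≤ r := Finset.sum_nonneg fun _ _ => sq_nonneg _
  have hSu : (inner 𝕜 S u : 𝕜) = r := by
    simp only [S, r, sum_inner, inner_smul_left, RCLike.conj_mul, map_sum, RCLike.ofReal_pow]
  have hrS : r ≤ ‖S‖ * ‖u‖ := by
    calc r = ‖(inner 𝕜 S u : 𝕜)‖ := by rw [hSu, RCLike.norm_ofReal, abs_of_nonneg hr]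
      _ ≤ ‖S‖ * ‖u‖ := norm_inner_le_norm S u
  have hS : ‖S‖ ^ 2 ≤ β * r := hv _ s
  -- `r ≤ ‖S‖ ‖u‖ ≤ √(β r) ‖u‖`, hence `r ≤ β ‖u‖²`
  rcases hr.eq_or_lt with h | h
  · rw [← h]; positivity
  · nlinarith [mul_le_mul hrS hrS hr (by positivity), mul_le_mul_of_nonneg_right hS (sq_nonneg ‖u‖)]

theorem summable_norm_inner_sq (hv : IsBesselFamily 𝕜 v β) (hβ : 0 ≤ β) (u : E) :
    Summable fun i => ‖(inner 𝕜 (v i) u : 𝕜)‖ ^ 2 :=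
  summable_of_sum_le (fun _ => sq_nonneg _) (hv.sum_norm_inner_sq_le hβ u)

theorem tsum_norm_inner_sq_le (hv : IsBesselFamily 𝕜 v β) (hβ : 0 ≤ β) (u : E) :
    ∑' i, ‖(inner 𝕜 (v i) u : 𝕜)‖ ^ 2 ≤ β * ‖u‖ ^ 2 :=
  (hv.summable_norm_inner_sq hβ u).tsum_le_of_sum_le (hv.sum_norm_inner_sq_le hβ u)

end IsBesselFamily

end Bessel

section InnerTsum

variable {ι 𝕜 E : Type*} [RCLike 𝕜] [NormedAddCommGroup E] [InnerProductSpace 𝕜 E]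

theorem inner_tsum_right {f : ι → E} (hf : Summable f) (u : E) :
    (inner 𝕜 u (∑' i, f i) : 𝕜) = ∑' i, (inner 𝕜 u (f i) : 𝕜) :=
  (innerSL 𝕜 u).map_tsum hf

theorem inner_tsum_left {f : ι → E} (hf : Summable f) (u : E) :
    (inner 𝕜 (∑' i, f i) u : 𝕜) = ∑' i, (inner 𝕜 (f i) u : 𝕜) := by
  rw [← inner_conj_symm, inner_tsum_right hf, RCLike.conj_tsum]
  simp only [inner_conj_symm]

end InnerTsum

section SquareSummable

variable {ι G E : Type*} [Fintype ι] [NormedAddCommGroup E]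

theorem lp.summable_norm_sq (f : lp (fun _ : G => E) 2) : Summable fun g => ‖f g‖ ^ 2 := by
  simpa using (memℓp_gen_iff (p := 2) (by norm_num)).mp f.2

theorem lp.norm_sq_eq_tsum (f : lp (fun _ : G => E) 2) : ‖f‖ ^ 2 = ∑' g, ‖f g‖ ^ 2 := by
  simpa using lp.norm_rpow_eq_tsum (p := 2) (by norm_num) f

theorem memℓp_two_of_summable_norm_sq {f : G → E} (hf : Summable fun g => ‖f g‖ ^ 2) :
    Memℓp f 2 :=
  memℓp_gen (by simpa using hf)

theorem PiLp.summable_norm_sq_lp (x : PiLp 2 fun _ : ι => lp (fun _ : G => E) 2) :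
    Summable fun p : ι × G => ‖x p.1 p.2‖ ^ 2 :=
  (summable_prod_of_nonneg fun _ => sq_nonneg _).mpr
    ⟨fun i => lp.summable_norm_sq (x i), .of_finite⟩

theorem PiLp.norm_sq_eq_tsum_lp (x : PiLp 2 fun _ : ι => lp (fun _ : G => E) 2) :
    ‖x‖ ^ 2 = ∑' p : ι × G, ‖x p.1 p.2‖ ^ 2 := by
  rw [PiLp.norm_sq_eq_of_L2, (PiLp.summable_norm_sq_lp x).tsum_prod'
    fun i => lp.summable_norm_sq (x i), tsum_fintype]
  simp_rw [lp.norm_sq_eq_tsum]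

end SquareSummable

theorem Finsupp.sum_fintype_curry {α β M N : Type*} [Fintype α] [Zero M] [AddCommMonoid N]
    (f : α × β →₀ M) (g : α × β → M → N) :
    ∑ a, (f.curry a).sum (fun b c => g (a, b) c) = f.sum g := by
  rw [← Finsupp.sum_fintype f.curry (fun a fa => fa.sum fun b c => g (a, b) c) fun _ => by simp]
  exact Finsupp.sum_curry_index f fun a b c => g (a, b) c

section Representation

variable {G H : Type*} [AddCommGroup G] [NormedAddCommGroup H] [InnerProductSpace ℂ H] {N : ℕ}

def orbitFamily (π : G → (H ≃ₗᵢ[ℂ] H)) (φ : Fin N → H) (p : Fin N × G) : H := π p.2 (φ p.1)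

variable {π : G → (H ≃ₗᵢ[ℂ] H)} {φ : Fin N → H}

theorem isBesselFamily_of_besselBound {β : ℝ} (hb : besselBound π φ β) :
    IsBesselFamily ℂ (orbitFamily π φ) β := by
  classical
  intro c s
  have hsynth := Finsupp.sum_fintype_curry (Finsupp.indicator s fun p _ => c p)
    (fun p c => c • orbitFamily π φ p)
  have hnorm := Finsupp.sum_fintype_curry (Finsupp.indicator s fun p _ => c p)
    (fun _ c => ‖c‖ ^ 2)
  rw [Finsupp.sum_indicator_index (h := fun p c => c • orbitFamily π φ p) c
    fun _ _ => zero_smul _ _] at hsynth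
  rw [Finsupp.sum_indicator_index (h := fun _ c => ‖c‖ ^ 2) c fun _ _ => by simp] at hnorm
  rw [← hsynth, ← hnorm]
  exact hb fun n => (Finsupp.indicator s fun p _ => c p).curry n

theorem inner_orbitFamily_orbitFamily (hπ : ∀ g g' : G, π (g + g') = (π g').trans (π g))
    (p q : Fin N × G) :
    (inner ℂ (orbitFamily π φ p) (orbitFamily π φ q) : ℂ) =
      inner ℂ (π (p.2 - q.2) (φ p.1)) (φ q.1) := by
  have h := hπ q.2 (p.2 - q.2)
  rw [add_sub_cancel] at h
  rw [orbitFamily, orbitFamily, h, LinearIsometryEquiv.trans_apply,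
    LinearIsometryEquiv.inner_map_map]

variable [CompleteSpace H] {β : ℝ}

theorem synth_eq_tsum (x : PiLp 2 (fun _ : Fin N => ell2 G)) :
    synth π φ x = ∑' p : Fin N × G, (x p.1 : G → ℂ) p.2 • orbitFamily π φ p :=
  rfl

theorem summable_synth (hv : IsBesselFamily ℂ (orbitFamily π φ) β) (hβ : 0 ≤ β)
    (x : PiLp 2 (fun _ : Fin N => ell2 G)) :
    Summable fun p : Fin N × G => (x p.1 : G → ℂ) p.2 • orbitFamily π φ p :=
  hv.summable_smul hβ (PiLp.summable_norm_sq_lp x)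

theorem norm_synth_sq_le (hv : IsBesselFamily ℂ (orbitFamily π φ) β) (hβ : 0 ≤ β)
    (x : PiLp 2 (fun _ : Fin N => ell2 G)) :
    ‖synth π φ x‖ ^ 2 ≤ β * ‖x‖ ^ 2 := by
  rw [PiLp.norm_sq_eq_tsum_lp]
  exact hv.norm_tsum_smul_sq_le hβ (PiLp.summable_norm_sq_lp x) (summable_synth hv hβ x)

theorem inner_orbitFamily_synth (hv : IsBesselFamily ℂ (orbitFamily π φ) β) (hβ : 0 ≤ β)
    (hπ : ∀ g g' : G, π (g + g') = (π g').trans (π g)) {a : Fin N → Fin N → G → ℂ}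
    (ha : ∀ m n g, a m n g = (inner ℂ ((π g) (φ m)) (φ n) : ℂ))
    (x : PiLp 2 (fun _ : Fin N => ell2 G)) (p : Fin N × G) :
    (inner ℂ (orbitFamily π φ p) (synth π φ x) : ℂ) =
      matConv a (fun n => (x n : G → ℂ)) p.1 p.2 := by
  have hterm : ∀ q : Fin N × G,
      (inner ℂ (orbitFamily π φ p) ((x q.1 : G → ℂ) q.2 • orbitFamily π φ q) : ℂ) =
        (x q.1 : G → ℂ) q.2 * a p.1 q.1 (p.2 - q.2) := fun q => by
    rw [inner_smul_right, inner_orbitFamily_orbitFamily hπ, ha]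
  have hsum : Summable fun q : Fin N × G => (x q.1 : G → ℂ) q.2 * a p.1 q.1 (p.2 - q.2) :=
    (((innerSL ℂ (orbitFamily π φ p)).summable (summable_synth hv hβ x))).congr hterm
  rw [synth_eq_tsum, inner_tsum_right (summable_synth hv hβ x), tsum_congr hterm,
    hsum.tsum_prod' hsum.prod_factor, tsum_fintype, matConv]
  refine Finset.sum_congr rfl fun n _ => ?_
  rw [conv, ← (Equiv.subLeft p.2).tsum_eq]
  refine tsum_congr fun g => ?_
  rw [Equiv.subLeft_apply, sub_sub_cancel, mul_comm]

theorem inner_synth_synth (hv : IsBesselFamily ℂ (orbitFamily π φ) β) (hβ : 0 ≤ β)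
    (hπ : ∀ g g' : G, π (g + g') = (π g').trans (π g)) {a : Fin N → Fin N → G → ℂ}
    (ha : ∀ m n g, a m n g = (inner ℂ ((π g) (φ m)) (φ n) : ℂ))
    (x y : PiLp 2 (fun _ : Fin N => ell2 G)) :
    (inner ℂ (synth π φ y) (synth π φ x) : ℂ) =
      ∑' q : Fin N × G,
        matConv a (fun n => (x n : G → ℂ)) q.1 q.2 * star ((y q.1 : G → ℂ) q.2) := by
  refine (inner_tsum_left (summable_synth hv hβ y) (synth π φ x)).trans <| tsum_congr fun q => ?_
  rw [inner_smul_left, inner_orbitFamily_synth hv hβ hπ ha, mul_comm]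
  rfl

theorem summable_norm_matConv_sq (hv : IsBesselFamily ℂ (orbitFamily π φ) β) (hβ : 0 ≤ β)
    (hπ : ∀ g g' : G, π (g + g') = (π g').trans (π g)) {a : Fin N → Fin N → G → ℂ}
    (ha : ∀ m n g, a m n g = (inner ℂ ((π g) (φ m)) (φ n) : ℂ))
    (x : PiLp 2 (fun _ : Fin N => ell2 G)) :
    Summable fun p : Fin N × G => ‖matConv a (fun n => (x n : G → ℂ)) p.1 p.2‖ ^ 2 :=
  (hv.summable_norm_inner_sq hβ (synth π φ x)).congr fun p => by
    rw [inner_orbitFamily_synth hv hβ hπ ha]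

theorem tsum_norm_matConv_sq_le (hv : IsBesselFamily ℂ (orbitFamily π φ) β) (hβ : 0 ≤ β)
    (hπ : ∀ g g' : G, π (g + g') = (π g').trans (π g)) {a : Fin N → Fin N → G → ℂ}
    (ha : ∀ m n g, a m n g = (inner ℂ ((π g) (φ m)) (φ n) : ℂ))
    (x : PiLp 2 (fun _ : Fin N => ell2 G)) :
    ∑' p : Fin N × G, ‖matConv a (fun n => (x n : G → ℂ)) p.1 p.2‖ ^ 2 ≤
      β * ‖synth π φ x‖ ^ 2 := by
  simpa only [inner_orbitFamily_synth hv hβ hπ ha] using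
    hv.tsum_norm_inner_sq_le hβ (synth π φ x)

theorem norm_matConv_le (hv : IsBesselFamily ℂ (orbitFamily π φ) β) (hβ : 0 ≤ β)
    (hπ : ∀ g g' : G, π (g + g') = (π g').trans (π g)) {a : Fin N → Fin N → G → ℂ}
    (ha : ∀ m n g, a m n g = (inner ℂ ((π g) (φ m)) (φ n) : ℂ))
    (x : PiLp 2 (fun _ : Fin N => ell2 G))
    (h : ∀ m, Memℓp (matConv a (fun n => (x n : G → ℂ)) m) 2) :
    ‖(WithLp.toLp 2 (fun m => ⟨matConv a (fun n => (x n : G → ℂ)) m, h m⟩) :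
      PiLp 2 (fun _ : Fin N => ell2 G))‖ ≤ β * ‖x‖ := by
  refine le_of_pow_le_pow_left₀ two_ne_zero (by positivity) ?_
  calc _ = ∑' p : Fin N × G, ‖matConv a (fun n => (x n : G → ℂ)) p.1 p.2‖ ^ 2 :=
        PiLp.norm_sq_eq_tsum_lp _
    _ ≤ β * ‖synth π φ x‖ ^ 2 := tsum_norm_matConv_sq_le hv hβ hπ ha x
    _ ≤ β * (β * ‖x‖ ^ 2) := by gcongr; exact norm_synth_sq_le hv hβ x
    _ = (β * ‖x‖) ^ 2 := by ring

end Representation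

theorem stmt_13_general {G : Type*} [AddCommGroup G]
    {H : Type*} [NormedAddCommGroup H] [InnerProductSpace ℂ H] [CompleteSpace H] {N : ℕ}
    (π : G → (H ≃ₗᵢ[ℂ] H))
    (hπ : ∀ g g' : G, π (g + g') = (π g').trans (π g))
    (φ : Fin N → H) (a : Fin N → Fin N → G → ℂ)
    (ha : ∀ m n g, a m n g = (inner ℂ ((π g) (φ m)) (φ n) : ℂ))
    (hB : ∃ β : ℝ, besselBound π φ β) :
    (∀ x y : PiLp 2 (fun _ : Fin N => ell2 G),
        (inner ℂ (synth π φ y) (synth π φ x) : ℂ) =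
          ∑' q : Fin N × G,
            matConv a (fun n => (x n : G → ℂ)) q.1 q.2 * star ((y q.1 : G → ℂ) q.2)) ∧
      ∃ C : ℝ, ∀ x : PiLp 2 (fun _ : Fin N => ell2 G),
        ∃ h : ∀ m, Memℓp (matConv a (fun n => (x n : G → ℂ)) m) 2,
          ‖(show PiLp 2 (fun _ : Fin N => ell2 G) from
              WithLp.toLp 2 (fun m => ⟨matConv a (fun n => (x n : G → ℂ)) m, h m⟩))‖ ≤ C * ‖x‖ := by
  obtain ⟨β, hb⟩ := hB
  have hv := (isBesselFamily_of_besselBound hb).max_zero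
  have hβ : 0 ≤ max β 0 := le_max_right _ _
  refine ⟨inner_synth_synth hv hβ hπ ha, max β 0, fun x => ?_⟩
  have hmem : ∀ m, Memℓp (matConv a (fun n => (x n : G → ℂ)) m) 2 := fun m =>
    memℓp_two_of_summable_norm_sq ((summable_norm_matConv_sq hv hβ hπ ha x).prod_factor m)
  exact ⟨hmem, norm_matConv_le hv hβ hπ ha x hmem⟩

/-- identity (8) of the paper and boundedness of the Gram convolution
operator. If `{π_g φ_n}` is a Bessel sequence, then
`⟨Σ x_n(g) π_g φ_n, Σ y_m(g) π_g φ_m⟩ = ⟨A ∗ x, y⟩` for all `x, y ∈ ℓ²(G)^N`, and `x ↦ A ∗ x`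
is bounded on `ℓ²(G)^N`. (Here `⟨u,v⟩` is linear in the first slot, i.e. `⟨u,v⟩ = ⟪v,u⟫` in
Mathlib's convention.) -/
theorem stmt_13 {G : Type*} [AddCommGroup G]
    {H : Type*} [NormedAddCommGroup H] [InnerProductSpace ℂ H] [CompleteSpace H]
    [TopologicalSpace.SeparableSpace H] {N : ℕ}
    (π : G → (H ≃ₗᵢ[ℂ] H))
    (hπ : ∀ g g' : G, π (g + g') = (π g').trans (π g))
    (hπ0 : π (0 : G) = LinearIsometryEquiv.refl ℂ H)
    (φ : Fin N → H) (a : Fin N → Fin N → G → ℂ)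
    (ha : ∀ m n g, a m n g = (inner ℂ ((π g) (φ m)) (φ n) : ℂ))
    (ha2 : ∀ m n, Memℓp (a m n) 2)
    (hB : ∃ β : ℝ, besselBound π φ β) :
    (∀ x y : PiLp 2 (fun _ : Fin N => ell2 G),
        (inner ℂ (synth π φ y) (synth π φ x) : ℂ) =
          ∑' q : Fin N × G,
            matConv a (fun n => (x n : G → ℂ)) q.1 q.2 * star ((y q.1 : G → ℂ) q.2)) ∧
      ∃ C : ℝ, ∀ x : PiLp 2 (fun _ : Fin N => ell2 G),
        ∃ h : ∀ m, Memℓp (matConv a (fun n => (x n : G → ℂ)) m) 2,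
          ‖(show PiLp 2 (fun _ : Fin N => ell2 G) from
              WithLp.toLp 2 (fun m => ⟨matConv a (fun n => (x n : G → ℂ)) m, h m⟩))‖ ≤ C * ‖x‖ :=
  stmt_13_general π hπ φ a ha hB
end
end
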